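/- Second error event bound in the proof of Theorem 3: for every ε > 0 there exists N such that for all n ≥ N, with 𝔅 = B^n_{(S,Y),ε}(𝐁) and M = |𝔅|, ∑_{𝐛⃗ ∈ 𝔅} (1/M) ∑_{s⃗ ∈ 𝒮ⁿ} 2^{−n} ∑_{y⃗ ∈ 𝒴ⁿ} p(y⃗ | 𝐛⃗, s⃗) ∑_{𝐛̃⃗ ∈ 𝔅, 𝐛̃⃗ ≠ 𝐛⃗} ∑_{s̃⃗ ∈ 𝒮ⁿ} 2^{−n}·1[(s̃⃗,y⃗) ∈ A^n_ε(SY) and (b̃⃗_j, y⃗) ∈ A^n_ε(B_jY) for all j = 1,…,m] ≤ 2^{n(H(𝐁) − H(𝐁,S) + ∑_{j=1}^m H(B_j|Y) + H(S|Y) + (12+2m)ε)}, where p(y⃗|𝐛⃗,s⃗) = ∏_{i=1}^n p(y_i | (s_i, f(𝐛_i))), b̃⃗_j denotes the j-th component bit-sequence of 𝐛̃⃗, and 1[·] is the indicator function. -/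

import Mathlib

open Real
open scoped BigOperators Classical

noncomputable section

/-- The sign alphabet `𝒮 = {-1, +1}`. -/
inductive Sign : Type
  | neg  -- the sign `-1`
  | pos  -- the sign `+1`
  deriving DecidableEq

instance : Fintype Sign :=
  ⟨⟨[Sign.neg, Sign.pos], by simp⟩, fun x => by cases x <;> simp⟩

/-- Probability of a length-`n` sequence under the i.i.d. product of the pmf `p`. -/
def seqProb {α : Type*} (p : α → ℝ) {n : ℕ} (u : Fin n → α) : ℝ :=
  ∏ i, p (u i)

/-- Entropy in bits of a pmf on a finite alphabet. -/
def ent {α : Type*} [Fintype α] (p : α → ℝ) : ℝ :=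
  -∑ a, p a * logb 2 (p a)

section Pair

variable {U V : Type*} [Fintype U] [Fintype V]

/-- `U`-marginal of a joint pmf on `U × V`. -/
def margU (p : U × V → ℝ) : U → ℝ := fun u => ∑ v, p (u, v)

/-- `V`-marginal of a joint pmf on `U × V`. -/
def margV (p : U × V → ℝ) : V → ℝ := fun v => ∑ u, p (u, v)

/-- Conditional pmf of `V` given `U`. -/
def condVU (p : U × V → ℝ) (u : U) (v : V) : ℝ := p (u, v) / margU p u

/-- The weakly typical set `A^n_ε(U)` with respect to a pmf `p`. -/
def typicalSet {α : Type*} [Fintype α] (p : α → ℝ) (n : ℕ) (ε : ℝ) :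
    Set (Fin n → α) :=
  {u | 0 < seqProb p u ∧ |(-(1 / (n : ℝ)) * logb 2 (seqProb p u)) - ent p| ≤ ε}

/-- The jointly typical set `A^n_ε(UV)` with respect to a joint pmf `p`. -/
def jointTypicalSet (p : U × V → ℝ) (n : ℕ) (ε : ℝ) :
    Set ((Fin n → U) × (Fin n → V)) :=
  {uv | 0 < seqProb (margU p) uv.1 ∧ 0 < seqProb (margV p) uv.2 ∧
    0 < seqProb p (fun i => (uv.1 i, uv.2 i)) ∧
    |(-(1 / (n : ℝ)) * logb 2 (seqProb (margU p) uv.1)) - ent (margU p)| ≤ ε ∧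
    |(-(1 / (n : ℝ)) * logb 2 (seqProb (margV p) uv.2)) - ent (margV p)| ≤ ε ∧
    |(-(1 / (n : ℝ)) * logb 2 (seqProb p (fun i => (uv.1 i, uv.2 i)))) - ent p| ≤ ε}

/-- The B-typical set `B^n_{V,ε}(U)`. -/
def BtypicalSet (p : U × V → ℝ) (n : ℕ) (ε : ℝ) : Set (Fin n → U) :=
  {u | u ∈ typicalSet (margU p) n ε ∧
    1 - ε ≤ ∑ v : Fin n → V,
      if (u, v) ∈ jointTypicalSet p n ε then ∏ i, condVU p (u i) (v i) else 0}

end Pair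

variable {A Y : Type*} [Fintype A] [Fintype Y] {m : ℕ}

/-- Output pmf `p(y) = ∑_{s,𝐛} (1/2)·p(𝐛)·p(y|(s,f(𝐛)))`. -/
def outPMF (W : Sign × A → Y → ℝ) (f : (Fin m → Bool) → A)
    (pb : (Fin m → Bool) → ℝ) : Y → ℝ :=
  fun y => ∑ s : Sign, ∑ b : Fin m → Bool, (1 / 2 : ℝ) * pb b * W (s, f b) y

/-- Joint pmf of `(S,Y)`. -/
def signOutPMF (W : Sign × A → Y → ℝ) (f : (Fin m → Bool) → A)
    (pb : (Fin m → Bool) → ℝ) : Sign × Y → ℝ :=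
  fun z => ∑ b : Fin m → Bool, (1 / 2 : ℝ) * pb b * W (z.1, f b) z.2

/-- Joint pmf of `(B_j, Y)`. -/
def bitOutPMF (W : Sign × A → Y → ℝ) (f : (Fin m → Bool) → A)
    (pb : (Fin m → Bool) → ℝ) (j : Fin m) : Bool × Y → ℝ :=
  fun z => ∑ s : Sign, ∑ b : Fin m → Bool,
    if b j = z.1 then (1 / 2 : ℝ) * pb b * W (s, f b) z.2 else 0

/-- Joint pmf of `(𝐁, S)` (= `(1/2)·p(𝐛)`, by independence and uniformity of `S`). -/
def bitsSignPMF (pb : (Fin m → Bool) → ℝ) : (Fin m → Bool) × Sign → ℝ :=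
  fun z => pb z.1 / 2

/-- The BMD rate `R_BMD = H(S,B₁,…,B_m) - H(S|Y) - ∑_j H(B_j|Y)`, where the conditional
entropies are `H(S|Y) = H(S,Y) - H(Y)` and `H(B_j|Y) = H(B_j,Y) - H(Y)`. -/
def RBMD (W : Sign × A → Y → ℝ) (f : (Fin m → Bool) → A)
    (pb : (Fin m → Bool) → ℝ) : ℝ :=
  ent (bitsSignPMF pb) - (ent (signOutPMF W f pb) - ent (outPMF W f pb)) -
    ∑ j : Fin m, (ent (bitOutPMF W f pb j) - ent (outPMF W f pb))

/-- The bit-metric typicality decoding condition for a message `mh`: the sign sequence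
is jointly typical with the output and every bit-level sequence is jointly typical with
the output. -/
def bmdCond (W : Sign × A → Y → ℝ) (f : (Fin m → Bool) → A)
    (pb : (Fin m → Bool) → ℝ) {n : ℕ} (ε : ℝ) {M : Type*}
    (b : M → Fin n → Fin m → Bool) (s : M → Fin n → Sign)
    (mh : M) (y : Fin n → Y) : Prop :=
  (s mh, y) ∈ jointTypicalSet (signOutPMF W f pb) n ε ∧
  ∀ j : Fin m, ((fun i => b mh i j), y) ∈ jointTypicalSet (bitOutPMF W f pb j) n ε

/-- Joint pmf of the pair `(𝐁, (S,Y))`, pairing the composite bits `𝐁` with the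
composite `(S,Y)`: `p(𝐛,(s,y)) = p(𝐛)·(1/2)·p(y|(s,f(𝐛)))`. -/
def pairBSY (W : Sign × A → Y → ℝ) (f : (Fin m → Bool) → A)
    (pb : (Fin m → Bool) → ℝ) : (Fin m → Bool) × (Sign × Y) → ℝ :=
  fun z => pb z.1 * (1 / 2 : ℝ) * W (z.2.1, f z.1) z.2.2

/-!
Fix the output `y⃗`. A competitor passes the bit-metric test only if its sign sequence lies in
the `y⃗`-fibre of `A^n_ε(SY)` and each of its bit columns lies in the `y⃗`-fibre of
`A^n_ε(B_jY)`; forgetting the constraint `𝐛̃⃗ ∈ 𝔅`, the inner sum is at most `2^{-n}` times the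
product of these fibre sizes. A `y⃗`-fibre of `A^n_ε(UV)` has at most
`2^{n(H(U,V) - H(V) + 2ε)}` elements: each member has probability at least `2^{-n(H(U,V)+ε)}`,
while their total mass is at most `p(y⃗) ≤ 2^{-n(H(V)-ε)}`. The resulting bound is uniform in
`𝐛⃗, s⃗, y⃗`, so it survives the outer averages, and `H(𝐁,S) = H(𝐁) + 1` absorbs the factor
`2^{-n}`; it holds for every `n`.
-/

open Finset

theorem sum_prod_eq_one {ι α : Type*} [Fintype ι] [DecidableEq ι] [Fintype α]
    {q : ι → α → ℝ} (hq : ∀ i, ∑ a, q i a = 1) :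
    ∑ u : ι → α, ∏ i, q i (u i) = 1 := by
  rw [← Fintype.prod_sum]
  simp [hq]

theorem sum_seqProb_fst {U V : Type*} [Fintype U] [Fintype V] (p : U × V → ℝ) {n : ℕ}
    (y : Fin n → V) :
    ∑ u : Fin n → U, seqProb p (fun i => (u i, y i)) = seqProb (margV p) y :=
  (Fintype.prod_sum fun i a => p (a, y i)).symm

theorem two_rpow_bounds_of_abs_logb_sub_le {q H ε : ℝ} {n : ℕ} (hn : 0 < n) (hq : 0 < q)
    (h : |-(1 / (n : ℝ)) * logb 2 q - H| ≤ ε) :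
    (2 : ℝ) ^ ((n : ℝ) * (-H - ε)) ≤ q ∧ q ≤ (2 : ℝ) ^ ((n : ℝ) * (ε - H)) := by
  have hn' : (0 : ℝ) < n := by exact_mod_cast hn
  obtain ⟨h₁, h₂⟩ := abs_le.mp h
  have hlog : logb 2 q = -(n : ℝ) * (-(1 / (n : ℝ)) * logb 2 q) := by field_simp
  rw [← Real.rpow_logb two_pos one_lt_two.ne' hq]
  constructor <;> apply Real.rpow_le_rpow_of_exponent_le one_le_two <;> nlinarith

theorem card_jointTypicalSet_fiber_le {U V : Type*} [Fintype U] [Fintype V]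
    (p : U × V → ℝ) (hp : ∀ z, 0 ≤ p z) (n : ℕ) (ε : ℝ) (y : Fin n → V) :
    (#{u : Fin n → U | (u, y) ∈ jointTypicalSet p n ε} : ℝ) ≤
      (2 : ℝ) ^ ((n : ℝ) * (ent p - ent (margV p) + 2 * ε)) := by
  rcases Nat.eq_zero_or_pos n with rfl | hn
  · simpa using card_filter_le (univ : Finset (Fin 0 → U)) _
  set F := ({u : Fin n → U | (u, y) ∈ jointTypicalSet p n ε} : Finset _)
  rcases F.eq_empty_or_nonempty with hF | ⟨u₀, hu₀⟩
  · rw [hF, card_empty, Nat.cast_zero]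
    positivity
  have hy : seqProb (margV p) y ≤ (2 : ℝ) ^ ((n : ℝ) * (ε - ent (margV p))) := by
    obtain ⟨-, hy_pos, -, -, hy_typ, -⟩ := (mem_filter.mp hu₀).2
    exact (two_rpow_bounds_of_abs_logb_sub_le hn hy_pos hy_typ).2
  have hu : ∀ u ∈ F, (2 : ℝ) ^ ((n : ℝ) * (-ent p - ε)) ≤ seqProb p (fun i => (u i, y i)) := by
    intro u hu
    obtain ⟨-, -, huy_pos, -, -, huy_typ⟩ := (mem_filter.mp hu).2
    exact (two_rpow_bounds_of_abs_logb_sub_le hn huy_pos huy_typ).1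
  have hmass : #F * (2 : ℝ) ^ ((n : ℝ) * (-ent p - ε)) ≤
      (2 : ℝ) ^ ((n : ℝ) * (ε - ent (margV p))) :=
    calc #F * (2 : ℝ) ^ ((n : ℝ) * (-ent p - ε))
        = ∑ u ∈ F, (2 : ℝ) ^ ((n : ℝ) * (-ent p - ε)) := by rw [sum_const, nsmul_eq_mul]
      _ ≤ ∑ u ∈ F, seqProb p (fun i => (u i, y i)) := sum_le_sum hu
      _ ≤ ∑ u : Fin n → U, seqProb p (fun i => (u i, y i)) :=
          sum_le_sum_of_subset_of_nonneg (subset_univ F) fun u _ _ =>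
            prod_nonneg fun i _ => hp _
      _ = seqProb (margV p) y := sum_seqProb_fst p y
      _ ≤ _ := hy
  calc (#F : ℝ) ≤ (2 : ℝ) ^ ((n : ℝ) * (ε - ent (margV p))) /
        (2 : ℝ) ^ ((n : ℝ) * (-ent p - ε)) := (le_div_iff₀ (by positivity)).2 hmass
    _ = _ := by rw [← Real.rpow_sub two_pos]; ring_nf

theorem card_filter_forall_col {ι κ α : Type*} [Fintype ι] [DecidableEq ι] [Fintype κ]
    [DecidableEq κ] [Fintype α] (c : κ → (ι → α) → Prop) [∀ j, DecidablePred (c j)]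
    [DecidablePred fun b : ι → κ → α => ∀ j, c j (fun i => b i j)] :
    #{b : ι → κ → α | ∀ j, c j (fun i => b i j)} = ∏ j, #{u | c j u} := by
  rw [← Fintype.card_piFinset]
  refine card_nbij' (fun b j i => b i j) (fun v i j => v j i) ?_ ?_ ?_ ?_ <;> intro x hx
  all_goals simp_all

theorem sum_mul_le_of_sum_le_one {ι : Type*} [Fintype ι] {q g : ι → ℝ} {K : ℝ}
    (hq0 : ∀ i, 0 ≤ q i) (hq1 : ∑ i, q i ≤ 1) (hK : 0 ≤ K) (hg : ∀ i, g i ≤ K) :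
    ∑ i, q i * g i ≤ K :=
  calc ∑ i, q i * g i ≤ ∑ i, q i * K :=
        sum_le_sum fun i _ => mul_le_mul_of_nonneg_left (hg i) (hq0 i)
    _ = (∑ i, q i) * K := (sum_mul _ _ _).symm
    _ ≤ K := mul_le_of_le_one_left hK hq1

theorem sum_ite_mem_one_div_ncard_le_one {α : Type*} [Fintype α] (S : Set α) :
    ∑ a, (if a ∈ S then 1 / (S.ncard : ℝ) else 0) ≤ 1 := by
  rw [sum_ite, sum_const_zero, add_zero, sum_const, nsmul_eq_mul, ← Set.ncard_coe_finset]
  simp only [coe_filter, mem_univ, true_and, Set.ofPred_mem_eq]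
  rcases eq_or_ne (S.ncard : ℝ) 0 with h | h
  · simp [h]
  · rw [mul_one_div_cancel h]

theorem sum_two_rpow_neg_eq_one (n : ℕ) : ∑ _s : Fin n → Sign, (2 : ℝ) ^ (-(n : ℝ)) = 1 := by
  rw [sum_const, card_univ, Fintype.card_fun, Fintype.card_fin, show Fintype.card Sign = 2 from rfl,
    nsmul_eq_mul, Nat.cast_pow, Nat.cast_ofNat, Real.rpow_neg zero_le_two, Real.rpow_natCast]
  exact mul_inv_cancel₀ (by positivity)

theorem sum_mul_sum_ite_and_le {β σ : Type*} [Fintype β] [Fintype σ] {w : β → ℝ}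
    (hw1 : ∀ b, w b ≤ 1) {c : ℝ} (hc : 0 ≤ c)
    (P : σ → Prop) (Q : β → Prop) [DecidablePred P] [DecidablePred Q] :
    ∑ b, w b * ∑ s, c * (if P s ∧ Q b then 1 else 0) ≤ c * #{s | P s} * #{b | Q b} := by
  have hsum : ∀ b, ∑ s, c * (if P s ∧ Q b then (1 : ℝ) else 0) =
      if Q b then c * #{s | P s} else 0 := by
    intro b
    split_ifs with hb <;> simp [hb, ← sum_filter, mul_comm]
  simp_rw [hsum, mul_ite, mul_zero, ← sum_filter]
  calc ∑ b ∈ {b | Q b}, w b * (c * #{s | P s})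
      ≤ ∑ b ∈ {b | Q b}, c * #{s | P s} :=
        sum_le_sum fun b _ => mul_le_of_le_one_left (by positivity) (hw1 b)
    _ = c * #{s | P s} * #{b | Q b} := by rw [sum_const, nsmul_eq_mul, mul_comm]

section BMD

variable {A Y : Type*} {m : ℕ}
  (W : Sign × A → Y → ℝ) (f : (Fin m → Bool) → A) (pb : (Fin m → Bool) → ℝ)

theorem margV_bitOutPMF (j : Fin m) : margV (bitOutPMF W f pb j) = outPMF W f pb := by
  funext y
  simp only [margV, bitOutPMF, outPMF, Fintype.sum_bool]
  rw [← sum_add_distrib]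
  refine sum_congr rfl fun s _ => ?_
  rw [← sum_add_distrib]
  refine sum_congr rfl fun b _ => ?_
  cases b j <;> simp

variable {W pb}

theorem signOutPMF_nonneg (hW0 : ∀ x y, 0 ≤ W x y) (hpb0 : ∀ b, 0 ≤ pb b) (z : Sign × Y) :
    0 ≤ signOutPMF W f pb z :=
  sum_nonneg fun b _ => by have := hpb0 b; have := hW0 (z.1, f b) z.2; positivity

theorem bitOutPMF_nonneg (hW0 : ∀ x y, 0 ≤ W x y) (hpb0 : ∀ b, 0 ≤ pb b) (j : Fin m)
    (z : Bool × Y) : 0 ≤ bitOutPMF W f pb j z :=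
  sum_nonneg fun s _ => sum_nonneg fun b _ => by
    have := hpb0 b; have := hW0 (s, f b) z.2; split_ifs <;> positivity

theorem ent_bitsSignPMF (hpb1 : ∑ b, pb b = 1) : ent (bitsSignPMF pb) = ent pb + 1 := by
  have hb : ∀ b, ∑ _s : Sign, pb b / 2 * logb 2 (pb b / 2) = pb b * logb 2 (pb b) - pb b := by
    intro b
    rw [sum_const, card_univ, show Fintype.card Sign = 2 from rfl, nsmul_eq_mul]
    rcases eq_or_ne (pb b) 0 with h | h
    · simp [h]
    · rw [Real.logb_div h two_ne_zero, Real.logb_self_eq_one one_lt_two]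
      ring
  simp only [ent, bitsSignPMF, Fintype.sum_prod_type, hb, sum_sub_distrib, hpb1]
  ring

theorem card_bitsTypical_fiber_le [Fintype Y] (hW0 : ∀ x y, 0 ≤ W x y) (hpb0 : ∀ b, 0 ≤ pb b)
    {n : ℕ} (ε : ℝ) (y : Fin n → Y) :
    (#{b : Fin n → Fin m → Bool |
        ∀ j, ((fun i => b i j), y) ∈ jointTypicalSet (bitOutPMF W f pb j) n ε} : ℝ) ≤
      (2 : ℝ) ^ ((n : ℝ) *
        ((∑ j : Fin m, (ent (bitOutPMF W f pb j) - ent (outPMF W f pb))) + 2 * m * ε)) := by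
  rw [card_filter_forall_col fun j u => (u, y) ∈ jointTypicalSet (bitOutPMF W f pb j) n ε,
    Nat.cast_prod]
  calc ∏ j : Fin m, (#{u | (u, y) ∈ jointTypicalSet (bitOutPMF W f pb j) n ε} : ℝ)
      ≤ ∏ j : Fin m, (2 : ℝ) ^ ((n : ℝ) *
          (ent (bitOutPMF W f pb j) - ent (outPMF W f pb) + 2 * ε)) := by
        refine prod_le_prod (fun j _ => Nat.cast_nonneg _) fun j _ => ?_
        rw [← margV_bitOutPMF W f pb j]
        exact card_jointTypicalSet_fiber_le _ (bitOutPMF_nonneg f hW0 hpb0 j) n ε y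
    _ = _ := by
        rw [← Real.rpow_sum_of_pos two_pos, ← mul_sum, sum_add_distrib, sum_const, card_univ,
          Fintype.card_fin, nsmul_eq_mul]
        congr 1
        ring

theorem sum_bmdTest_le [Fintype Y] (hW0 : ∀ x y, 0 ≤ W x y) (hpb0 : ∀ b, 0 ≤ pb b)
    {n : ℕ} (ε : ℝ) {w : (Fin n → Fin m → Bool) → ℝ} (hw1 : ∀ b, w b ≤ 1) (y : Fin n → Y) :
    ∑ b', w b' * ∑ s' : Fin n → Sign, (2 : ℝ) ^ (-(n : ℝ)) *
        (if ((s', y) ∈ jointTypicalSet (signOutPMF W f pb) n ε ∧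
            ∀ j : Fin m, ((fun i => b' i j), y) ∈ jointTypicalSet (bitOutPMF W f pb j) n ε)
          then 1 else 0) ≤
      (2 : ℝ) ^ ((n : ℝ) * ((∑ j : Fin m, (ent (bitOutPMF W f pb j) - ent (outPMF W f pb))) +
        (ent (signOutPMF W f pb) - ent (outPMF W f pb)) - 1 + (2 + 2 * m) * ε)) := by
  refine (sum_mul_sum_ite_and_le hw1 (by positivity) _ _).trans ?_
  calc (2 : ℝ) ^ (-(n : ℝ)) * #{s | (s, y) ∈ jointTypicalSet (signOutPMF W f pb) n ε} *
        #{b : Fin n → Fin m → Bool |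
          ∀ j, ((fun i => b i j), y) ∈ jointTypicalSet (bitOutPMF W f pb j) n ε}
      ≤ (2 : ℝ) ^ (-(n : ℝ)) *
          (2 : ℝ) ^ ((n : ℝ) * (ent (signOutPMF W f pb) - ent (outPMF W f pb) + 2 * ε)) *
          (2 : ℝ) ^ ((n : ℝ) *
            ((∑ j : Fin m, (ent (bitOutPMF W f pb j) - ent (outPMF W f pb))) + 2 * m * ε)) := by
        gcongr
        · exact card_jointTypicalSet_fiber_le _ (signOutPMF_nonneg f hW0 hpb0) n ε y
        · exact card_bitsTypical_fiber_le f hW0 hpb0 ε y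
    _ = _ := by
        rw [← Real.rpow_add two_pos, ← Real.rpow_add two_pos]
        ring_nf

end BMD

theorem second_error_event_bound_BMD_general
    (W : Sign × A → Y → ℝ) (hW0 : ∀ x y, 0 ≤ W x y) (hW1 : ∀ x, ∑ y, W x y = 1)
    (f : (Fin m → Bool) → A)
    (pb : (Fin m → Bool) → ℝ) (hpb0 : ∀ b, 0 ≤ pb b) (hpb1 : ∑ b, pb b = 1)
    (ε : ℝ) (hε : 0 < ε) :
    ∃ N : ℕ, ∀ n : ℕ, N ≤ n →
      (∑ b : Fin n → Fin m → Bool,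
        (if b ∈ BtypicalSet (pairBSY W f pb) n ε then
          (1 / ((BtypicalSet (pairBSY W f pb) n ε).ncard : ℝ)) else 0) *
        ∑ s : Fin n → Sign, (2 : ℝ) ^ (-(n : ℝ)) *
          ∑ y : Fin n → Y, (∏ i, W (s i, f (b i)) (y i)) *
            ∑ b' : Fin n → Fin m → Bool,
              (if b' ∈ BtypicalSet (pairBSY W f pb) n ε ∧ b' ≠ b then 1 else 0) *
              ∑ s' : Fin n → Sign, (2 : ℝ) ^ (-(n : ℝ)) *
                (if ((s', y) ∈ jointTypicalSet (signOutPMF W f pb) n ε ∧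
                    ∀ j : Fin m,
                      ((fun i => b' i j), y) ∈ jointTypicalSet (bitOutPMF W f pb j) n ε)
                  then 1 else 0)) ≤
      (2 : ℝ) ^ ((n : ℝ) *
        (ent pb - ent (bitsSignPMF pb) +
          (∑ j : Fin m, (ent (bitOutPMF W f pb j) - ent (outPMF W f pb))) +
          (ent (signOutPMF W f pb) - ent (outPMF W f pb)) +
          (12 + 2 * (m : ℝ)) * ε)) := by
  refine ⟨0, fun n _ => ?_⟩
  calc _ ≤ (2 : ℝ) ^ ((n : ℝ) *
        ((∑ j : Fin m, (ent (bitOutPMF W f pb j) - ent (outPMF W f pb))) +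
          (ent (signOutPMF W f pb) - ent (outPMF W f pb)) - 1 + (2 + 2 * m) * ε)) := by
        refine sum_mul_le_of_sum_le_one (fun b => by split_ifs <;> positivity)
          (sum_ite_mem_one_div_ncard_le_one _) (by positivity) fun b => ?_
        refine sum_mul_le_of_sum_le_one (fun _ => by positivity)
          (sum_two_rpow_neg_eq_one n).le (by positivity) fun s => ?_
        refine sum_mul_le_of_sum_le_one (fun y => prod_nonneg fun i _ => hW0 _ _)
          (sum_prod_eq_one fun i => hW1 _).le (by positivity) fun y => ?_
        exact sum_bmdTest_le f hW0 hpb0 ε (fun b' => by split_ifs <;> norm_num) y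
    _ ≤ _ := by
        rw [ent_bitsSignPMF hpb1]
        gcongr 2 ^ (_ * ?_)
        · norm_num
        · linarith

/-- **Second error event bound in the proof of Theorem 3**: for every `ε > 0` there is
`N` such that for all `n ≥ N`, with `𝔅 = B^n_{(S,Y),ε}(𝐁)` and `M = |𝔅|`, the average
(over a uniformly random sign codebook) probability that some other codeword passes the
bit-metric typicality test is at most
`2^{n(H(𝐁) - H(𝐁,S) + ∑_j H(B_j|Y) + H(S|Y) + (12+2m)ε)}`. -/
theorem second_error_event_bound_BMD
    (W : Sign × A → Y → ℝ) (hW0 : ∀ x y, 0 ≤ W x y) (hW1 : ∀ x, ∑ y, W x y = 1)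
    (f : (Fin m → Bool) → A) (hf : Function.Bijective f)
    (pb : (Fin m → Bool) → ℝ) (hpb0 : ∀ b, 0 ≤ pb b) (hpb1 : ∑ b, pb b = 1)
    (ε : ℝ) (hε : 0 < ε) :
    ∃ N : ℕ, ∀ n : ℕ, N ≤ n →
      (∑ b : Fin n → Fin m → Bool,
        (if b ∈ BtypicalSet (pairBSY W f pb) n ε then
          (1 / ((BtypicalSet (pairBSY W f pb) n ε).ncard : ℝ)) else 0) *
        ∑ s : Fin n → Sign, (2 : ℝ) ^ (-(n : ℝ)) *
          ∑ y : Fin n → Y, (∏ i, W (s i, f (b i)) (y i)) *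
            ∑ b' : Fin n → Fin m → Bool,
              (if b' ∈ BtypicalSet (pairBSY W f pb) n ε ∧ b' ≠ b then 1 else 0) *
              ∑ s' : Fin n → Sign, (2 : ℝ) ^ (-(n : ℝ)) *
                (if ((s', y) ∈ jointTypicalSet (signOutPMF W f pb) n ε ∧
                    ∀ j : Fin m,
                      ((fun i => b' i j), y) ∈ jointTypicalSet (bitOutPMF W f pb j) n ε)
                  then 1 else 0)) ≤
      (2 : ℝ) ^ ((n : ℝ) *
        (ent pb - ent (bitsSignPMF pb) +
          (∑ j : Fin m, (ent (bitOutPMF W f pb j) - ent (outPMF W f pb))) +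
          (ent (signOutPMF W f pb) - ent (outPMF W f pb)) +
          (12 + 2 * (m : ℝ)) * ε)) :=
  second_error_event_bound_BMD_general W hW0 hW1 f pb hpb0 hpb1 ε hε
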